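/- Assume additionally that the derivative D_u h(x) exists for every x ∈ ℝ^m and is jointly continuous as a function of x. Then for every M > 0 there exists C > 0 such that for all r ∈ [0,M] and all x ∈ ℝ^m with |x| ≤ M one has |π_u(h̃(r,x))| ≤ C·|π_u(x)|, where |·| denotes the Euclidean norm on ℝ^m. -/
import Mathlib


open Set

/-- The Euclidean norm on `ℝᵐ`. -/
noncomputable def eNorm {m : ℕ} (x : Fin m → ℝ) : ℝ := Real.sqrt (∑ i, x i ^ 2)

/-- Projection of `ℝᵐ` onto its first `d` coordinates (extended by zero). -/
def piU (d : ℕ) {m : ℕ} (x : Fin m → ℝ) : Fin m → ℝ :=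
  fun i => if (i : ℕ) < d then x i else 0

/-- Projection of `ℝᵐ` onto its last `m − d` coordinates (extended by zero). -/
def piZ (d : ℕ) {m : ℕ} (x : Fin m → ℝ) : Fin m → ℝ :=
  fun i => if (i : ℕ) < d then 0 else x i

/-- The blow-up `h̃(r,x)` of `h` : for `r > 0`,
`h̃(r,x) = r⁻¹ π_u(h(r x_u, x_z)) + π_z(h(r x_u, x_z))`, and for `r = 0`,
`h̃(0,x) = π_u(D_u h(0, x_z)[x_u]) + h(0, x_z)`, where the derivative in the
first `d` variables is recorded by `Duh`. -/
noncomputable def tildeH (d : ℕ) {m : ℕ} (h : (Fin m → ℝ) → (Fin m → ℝ))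
    (Duh : (Fin m → ℝ) → ((Fin m → ℝ) →L[ℝ] (Fin m → ℝ)))
    (r : ℝ) (x : Fin m → ℝ) : Fin m → ℝ :=
  if r = 0 then
    piU d (Duh (piZ d x) (piU d x)) + h (piZ d x)
  else
    r⁻¹ • piU d (h (r • piU d x + piZ d x)) + piZ d (h (r • piU d x + piZ d x))

lemma piU_add (d : ℕ) {m : ℕ} (x y : Fin m → ℝ) : piU d (x + y) = piU d x + piU d y := by
  funext i; by_cases hi : (i:ℕ) < d <;> simp [piU, hi]

lemma piU_smul (d : ℕ) {m : ℕ} (c : ℝ) (x : Fin m → ℝ) : piU d (c • x) = c • piU d x := by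
  funext i; by_cases hi : (i:ℕ) < d <;> simp [piU, hi]

lemma piU_piU (d : ℕ) {m : ℕ} (x : Fin m → ℝ) : piU d (piU d x) = piU d x := by
  funext i; by_cases hi : (i:ℕ) < d <;> simp [piU, hi]

lemma piU_piZ (d : ℕ) {m : ℕ} (x : Fin m → ℝ) : piU d (piZ d x) = 0 := by
  funext i; by_cases hi : (i:ℕ) < d <;> simp [piU, piZ, hi]

lemma piZ_piZ (d : ℕ) {m : ℕ} (x : Fin m → ℝ) : piZ d (piZ d x) = piZ d x := by
  funext i; by_cases hi : (i:ℕ) < d <;> simp [piZ, hi]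

lemma piZ_piU (d : ℕ) {m : ℕ} (x : Fin m → ℝ) : piZ d (piU d x) = 0 := by
  funext i; by_cases hi : (i:ℕ) < d <;> simp [piU, piZ, hi]

lemma piZ_add (d : ℕ) {m : ℕ} (x y : Fin m → ℝ) : piZ d (x + y) = piZ d x + piZ d y := by
  funext i; by_cases hi : (i:ℕ) < d <;> simp [piZ, hi]

lemma piZ_smul (d : ℕ) {m : ℕ} (c : ℝ) (x : Fin m → ℝ) : piZ d (c • x) = c • piZ d x := by
  funext i; by_cases hi : (i:ℕ) < d <;> simp [piZ, hi]

lemma norm_piU_le (d : ℕ) {m : ℕ} (x : Fin m → ℝ) : ‖piU d x‖ ≤ ‖x‖ := by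
  rw [pi_norm_le_iff_of_nonneg (norm_nonneg x)]
  intro i
  simp only [piU]
  split
  · exact norm_le_pi_norm x i
  · simp

lemma norm_piZ_le (d : ℕ) {m : ℕ} (x : Fin m → ℝ) : ‖piZ d x‖ ≤ ‖x‖ := by
  rw [pi_norm_le_iff_of_nonneg (norm_nonneg x)]
  intro i
  simp only [piZ]
  split
  · simp
  · exact norm_le_pi_norm x i

lemma eNorm_nonneg {m : ℕ} (x : Fin m → ℝ) : 0 ≤ eNorm x := Real.sqrt_nonneg _

lemma norm_le_eNorm {m : ℕ} (x : Fin m → ℝ) : ‖x‖ ≤ eNorm x := by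
  rw [pi_norm_le_iff_of_nonneg (eNorm_nonneg x)]
  intro i
  rw [Real.norm_eq_abs, ← Real.sqrt_sq_eq_abs]
  apply Real.sqrt_le_sqrt
  exact Finset.single_le_sum (f := fun j => x j ^ 2) (fun j _ => sq_nonneg _) (Finset.mem_univ i)

lemma eNorm_le {m : ℕ} (x : Fin m → ℝ) : eNorm x ≤ Real.sqrt m * ‖x‖ := by
  rw [← Real.sqrt_sq (norm_nonneg x), ← Real.sqrt_mul (Nat.cast_nonneg m)]
  apply Real.sqrt_le_sqrt
  calc ∑ i, x i ^ 2 ≤ ∑ _i : Fin m, ‖x‖ ^ 2 := by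
        apply Finset.sum_le_sum
        intro i _
        have h1 : |x i| ≤ ‖x‖ := by simpa using norm_le_pi_norm x i
        nlinarith [abs_nonneg (x i), sq_abs (x i)]
    _ = m * ‖x‖ ^ 2 := by simp [Finset.sum_const]

lemma piU_sub (d : ℕ) {m : ℕ} (x y : Fin m → ℝ) : piU d (x - y) = piU d x - piU d y := by
  funext i; by_cases hi : (i:ℕ) < d <;> simp [piU, hi]


/-- if `h` is differentiable in the first `d` variables with jointly
continuous derivative `D_u h` and `π_u(h(π_z x)) = 0`, then for every `M > 0`
there exists `C > 0` such that `|π_u(h̃(r,x))| ≤ C |π_u x|` for all `r ∈ [0,M]`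
and all `x` with `|x| ≤ M`, where `|·|` is the Euclidean norm on `ℝᵐ`. -/
theorem stmt_6 (d m : ℕ) (hd : 1 ≤ d) (hdm : d ≤ m)
    (h : (Fin m → ℝ) → (Fin m → ℝ))
    (Duh : (Fin m → ℝ) → ((Fin m → ℝ) →L[ℝ] (Fin m → ℝ)))
    (hzero : ∀ x : Fin m → ℝ, piU d (h (piZ d x)) = 0)
    (hderiv : ∀ x : Fin m → ℝ, HasFDerivAt (fun v => h (piU d v + piZ d x)) (Duh x) x)
    (hcont : Continuous Duh) :
    ∀ M : ℝ, 0 < M → ∃ C : ℝ, 0 < C ∧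
      ∀ r ∈ Set.Icc (0 : ℝ) M, ∀ x : Fin m → ℝ, eNorm x ≤ M →
        eNorm (piU d (tildeH d h Duh r x)) ≤ C * eNorm (piU d x) := by
  intro M hM
  set R : ℝ := M * M + M with hR
  obtain ⟨K, hK⟩ := (isCompact_closedBall (0 : Fin m → ℝ) R).exists_bound_of_continuousOn
    hcont.continuousOn
  set K' : ℝ := max K 0 with hK'def
  have hK'nn : 0 ≤ K' := le_max_right _ _
  have hK' : ∀ w ∈ Metric.closedBall (0 : Fin m → ℝ) R, ‖Duh w‖ ≤ K' :=
    fun w hw => (hK w hw).trans (le_max_left _ _)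
  have hm1 : 1 ≤ m := le_trans hd hdm
  have hsqrt : 0 < Real.sqrt m := Real.sqrt_pos.mpr (by exact_mod_cast Nat.pos_of_ne_zero (by omega))
  refine ⟨Real.sqrt m * (K' + 1), by positivity, ?_⟩
  intro r hr x hx
  set u := piU d x with hu
  set y := piZ d x with hy
  have hu_norm : ‖u‖ ≤ M := le_trans (norm_piU_le d x) (le_trans (norm_le_eNorm x) hx)
  have hy_norm : ‖y‖ ≤ M := le_trans (norm_piZ_le d x) (le_trans (norm_le_eNorm x) hx)
  have hMR : M ≤ R := by nlinarith
  have hy_ball : y ∈ Metric.closedBall (0 : Fin m → ℝ) R := by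
    rw [Metric.mem_closedBall, dist_zero_right]; exact hy_norm.trans hMR
  have key : ‖piU d (tildeH d h Duh r x)‖ ≤ K' * ‖u‖ := by
    rcases eq_or_lt_of_le hr.1 with hr0 | hrpos
    · -- r = 0
      have : tildeH d h Duh r x = piU d (Duh y u) + h y := by
        rw [tildeH, if_pos hr0.symm]
      rw [this, piU_add, piU_piU, hzero x, add_zero]
      calc ‖piU d (Duh y u)‖ ≤ ‖Duh y u‖ := norm_piU_le d _
        _ ≤ ‖Duh y‖ * ‖u‖ := (Duh y).le_opNorm u
        _ ≤ K' * ‖u‖ := mul_le_mul_of_nonneg_right (hK' y hy_ball) (norm_nonneg u)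
    · -- r > 0
      have hrne : r ≠ 0 := ne_of_gt hrpos
      set b : Fin m → ℝ := r • u + y with hb
      have hb_ball : b ∈ Metric.closedBall (0 : Fin m → ℝ) R := by
        rw [Metric.mem_closedBall, dist_zero_right]
        calc ‖r • u + y‖ ≤ ‖r • u‖ + ‖y‖ := norm_add_le _ _
          _ = r * ‖u‖ + ‖y‖ := by rw [norm_smul, Real.norm_eq_abs, abs_of_pos hrpos]
          _ ≤ M * M + M := by
              have := hr.2
              nlinarith [norm_nonneg u]
      have hseg : segment ℝ y b ⊆ Metric.closedBall (0 : Fin m → ℝ) R :=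
        (convex_closedBall _ _).segment_subset hy_ball hb_ball
      have hpiZ_seg : ∀ w ∈ segment ℝ y b, piZ d w = y := by
        rintro w ⟨a, c, ha, hc, hac, rfl⟩
        rw [piZ_add, piZ_smul, piZ_smul, hb, piZ_add, piZ_smul, hy, piZ_piZ, hu, piZ_piU,
          smul_zero, zero_add, ← hy, ← add_smul, hac, one_smul]
      set f : (Fin m → ℝ) → (Fin m → ℝ) := fun v => h (piU d v + y) with hf
      have hfd : ∀ w ∈ segment ℝ y b, HasFDerivWithinAt f (Duh w) (segment ℝ y b) w := by
        intro w hw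
        have := (hderiv w).hasFDerivWithinAt (s := segment ℝ y b)
        rwa [hpiZ_seg w hw] at this
      have hbd : ∀ w ∈ segment ℝ y b, ‖Duh w‖ ≤ K' := fun w hw => hK' w (hseg hw)
      have hmvt := (convex_segment y b).norm_image_sub_le_of_norm_hasFDerivWithin_le
        hfd hbd (left_mem_segment ℝ y b) (right_mem_segment ℝ y b)
      have hfy : f y = h y := by
        rw [hf]; simp only; rw [hy, piU_piZ, zero_add, ← hy]
      have hpiUb : piU d b = r • u := by
        rw [hb, piU_add, piU_smul, hy, piU_piZ, add_zero, hu, piU_piU, ← hu]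
      have hfb : f b = h b := by
        rw [hf]; simp only
        rw [hpiUb, hb]
      have hby : b - y = r • u := by rw [hb]; abel
      rw [hfy, hfb, hby, norm_smul, Real.norm_eq_abs, abs_of_pos hrpos] at hmvt
      have htH : piU d (tildeH d h Duh r x) = r⁻¹ • piU d (h b) := by
        rw [tildeH, if_neg hrne, ← hu, ← hy, ← hb, piU_add, piU_smul, piU_piU, piU_piZ, add_zero]
      rw [htH]
      have hpiUhb : piU d (h b) = piU d (h b - h y) := by
        rw [piU_sub, hy, hzero x, sub_zero]
      rw [hpiUhb, norm_smul, Real.norm_eq_abs, abs_of_pos (inv_pos.mpr hrpos)]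
      calc r⁻¹ * ‖piU d (h b - h y)‖ ≤ r⁻¹ * ‖h b - h y‖ :=
            mul_le_mul_of_nonneg_left (norm_piU_le d _) (le_of_lt (inv_pos.mpr hrpos))
        _ ≤ r⁻¹ * (K' * (r * ‖u‖)) := mul_le_mul_of_nonneg_left hmvt (le_of_lt (inv_pos.mpr hrpos))
        _ = K' * ‖u‖ := by field_simp
  calc eNorm (piU d (tildeH d h Duh r x)) ≤ Real.sqrt m * ‖piU d (tildeH d h Duh r x)‖ :=
        eNorm_le _
    _ ≤ Real.sqrt m * (K' * ‖u‖) := mul_le_mul_of_nonneg_left key (le_of_lt hsqrt)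
    _ ≤ Real.sqrt m * ((K' + 1) * eNorm u) := by
        apply mul_le_mul_of_nonneg_left _ (le_of_lt hsqrt)
        nlinarith [norm_le_eNorm u, norm_nonneg u, eNorm_nonneg u]
    _ = Real.sqrt m * (K' + 1) * eNorm (piU d x) := by rw [← hu]; ring
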